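/- arXiv:2503.07915 — 5 statements merged into one kernel-verified Lean document; each statement's English description precedes it below -/
import Mathlib

section
/- Let R be a finite nonzero commutative ring with identity in which 2 is a unit, let |R| = r, let n ≥ 2, and let f_i : R^{2i-2} → R for 2 ≤ i ≤ n be symmetric functions. Then there are exactly r vectors a ∈ R^n satisfying a_i + a_i = f_i(a_1,a_1,a_2,a_2,…,a_{i-1},a_{i-1}) for all 2 ≤ i ≤ n (i.e., Γ(R; f_2,…,f_n) viewed with loops has exactly r loops), and the loopless simple graph Γ(R; f_2,…,f_n) has exactly r vertices of degree r−1 and exactly r^n − r vertices of degree r. -/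
/-!
Both the neighbourhood system `a_i + b_i = f_i(a_{<i}, b_{<i})` (for fixed `a`) and the loop
system `2 a_i = f_i(a_{<i}, a_{<i})` (once `2` is inverted) are triangular: the first coordinate is
free and each later coordinate is determined by the earlier ones. Hence every vertex has exactly
`r` partners and there are exactly `r` loops. By symmetry of the `f_i` the relation is symmetric,
so a vertex has degree `r - 1` if it carries a loop and degree `r` otherwise.
-/

/-- The adjacency condition of the graph `Γ(R; f₂, …, f_n)`: vectors `a, b ∈ R^n`
(0-indexed, coordinate `i` corresponding to subscript `i+1`) satisfy the system
`a_i + b_i = f_i(a_1, b_1, …, a_{i-1}, b_{i-1})` for all `2 ≤ i ≤ n`. -/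
def gAdj {R : Type} [CommRing R] (n : ℕ)
    (f : (i : ℕ) → (Fin i → R) → (Fin i → R) → R)
    (a b : Fin n → R) : Prop :=
  ∀ i : Fin n, 1 ≤ (i : ℕ) →
    a i + b i = f i (fun j => a (Fin.castLE i.isLt.le j))
                    (fun j => b (Fin.castLE i.isLt.le j))

/-- The (loopless, simple) graph `Γ(R; f₂, …, f_n)` on vertex set `R^n`:
distinct `a, b` are adjacent iff the system of equations holds. -/
def Gamma (R : Type) [CommRing R] (n : ℕ)
    (f : (i : ℕ) → (Fin i → R) → (Fin i → R) → R) :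
    SimpleGraph (Fin n → R) :=
  SimpleGraph.fromRel (fun a b => gAdj n f a b)

open Set

section Triangular

variable {α : Type*} {n : ℕ}

def triangularSolutions (g : (i : Fin n) → (Fin i → α) → α) : Set (Fin n → α) :=
  {b | ∀ i : Fin n, 1 ≤ (i : ℕ) → b i = g i fun j => b (Fin.castLE i.isLt.le j)}

def triangularSolve (g : (i : Fin n) → (Fin i → α) → α) (t : α) (i : Fin n) : α :=
  if (i : ℕ) = 0 then t else g i fun j => triangularSolve g t (Fin.castLE i.isLt.le j)
termination_by (i : ℕ)
decreasing_by exact j.isLt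

variable (g : (i : Fin n) → (Fin i → α) → α)

lemma triangularSolve_of_val_eq_zero (t : α) {i : Fin n} (hi : (i : ℕ) = 0) :
    triangularSolve g t i = t := by
  rw [triangularSolve, if_pos hi]

lemma triangularSolve_mem (t : α) : triangularSolve g t ∈ triangularSolutions g := by
  intro i hi
  rw [triangularSolve, if_neg (by omega)]

lemma eq_triangularSolve_of_mem {b : Fin n → α} (hb : b ∈ triangularSolutions g) (i₀ : Fin n)
    (hi₀ : (i₀ : ℕ) = 0) : b = triangularSolve g (b i₀) := by
  funext i
  induction i using WellFoundedLT.induction with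
  | ind i ih =>
    rw [triangularSolve]
    split_ifs with hi
    · exact congrArg b (Fin.ext (hi.trans hi₀.symm))
    · rw [hb i (by omega)]
      congr 1
      funext j
      exact ih _ j.isLt

lemma ncard_triangularSolutions (hn : 0 < n) :
    (triangularSolutions g).ncard = Nat.card α := by
  have hrange : triangularSolutions g = range (triangularSolve g) := by
    ext b
    refine ⟨fun hb => ⟨b ⟨0, hn⟩, (eq_triangularSolve_of_mem g hb ⟨0, hn⟩ rfl).symm⟩, ?_⟩
    rintro ⟨t, rfl⟩
    exact triangularSolve_mem g t
  have hinj : Function.Injective (triangularSolve g) := fun s t hst => by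
    simpa only [triangularSolve_of_val_eq_zero g _ (i := ⟨0, hn⟩) rfl] using
      congrFun hst ⟨0, hn⟩
  rw [hrange, ncard_range_of_injective hinj]

end Triangular

section Gamma

variable {R : Type} [CommRing R] {n : ℕ} {f : (i : ℕ) → (Fin i → R) → (Fin i → R) → R}

lemma setOf_gAdj_eq_triangularSolutions (a : Fin n → R) :
    {b | gAdj n f a b} =
      triangularSolutions fun i x => f i (fun j => a (Fin.castLE i.isLt.le j)) x - a i := by
  ext b
  exact forall₂_congr fun i _ => eq_sub_iff_add_eq'.symm

lemma setOf_gAdj_self_eq_triangularSolutions (h2 : IsUnit (2 : R)) :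
    {a | gAdj n f a a} = triangularSolutions fun i x => ↑h2.unit⁻¹ * f i x x := by
  ext a
  refine forall₂_congr fun i _ => ?_
  rw [Units.eq_inv_mul_iff_mul_eq, IsUnit.unit_spec, two_mul]

lemma gAdj_symm (hsym : ∀ (i : ℕ) (x y : Fin i → R), f i x y = f i y x) {a b : Fin n → R}
    (hab : gAdj n f a b) : gAdj n f b a := fun i hi => by
  rw [add_comm, hsym]
  exact hab i hi

lemma neighborSet_Gamma (hsym : ∀ (i : ℕ) (x y : Fin i → R), f i x y = f i y x)
    (a : Fin n → R) : (Gamma R n f).neighborSet a = {b | gAdj n f a b} \ {a} := by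
  ext b
  simp only [SimpleGraph.mem_neighborSet, Gamma, SimpleGraph.fromRel_adj, mem_sdiff,
    mem_ofPred_eq, mem_singleton_iff]
  exact ⟨fun ⟨hne, h⟩ => ⟨h.elim id (gAdj_symm hsym), Ne.symm hne⟩,
    fun ⟨h, hne⟩ => ⟨Ne.symm hne, Or.inl h⟩⟩

variable [Fintype R]

lemma ncard_setOf_gAdj (hn : 0 < n) (a : Fin n → R) :
    {b | gAdj n f a b}.ncard = Fintype.card R := by
  rw [setOf_gAdj_eq_triangularSolutions, ncard_triangularSolutions _ hn,
    Nat.card_eq_fintype_card]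

lemma ncard_setOf_gAdj_self (h2 : IsUnit (2 : R)) (hn : 0 < n) :
    {a | gAdj n f a a}.ncard = Fintype.card R := by
  rw [setOf_gAdj_self_eq_triangularSolutions h2, ncard_triangularSolutions _ hn,
    Nat.card_eq_fintype_card]

variable (hsym : ∀ (i : ℕ) (x y : Fin i → R), f i x y = f i y x) (hn : 0 < n)
include hsym hn

lemma ncard_neighborSet_Gamma_of_gAdj_self {a : Fin n → R} (ha : gAdj n f a a) :
    ((Gamma R n f).neighborSet a).ncard = Fintype.card R - 1 := by
  rw [neighborSet_Gamma hsym, ncard_sdiff_singleton_of_mem ha, ncard_setOf_gAdj hn]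

lemma ncard_neighborSet_Gamma_of_not_gAdj_self {a : Fin n → R} (ha : ¬gAdj n f a a) :
    ((Gamma R n f).neighborSet a).ncard = Fintype.card R := by
  rw [neighborSet_Gamma hsym, sdiff_singleton_eq_self ha, ncard_setOf_gAdj hn]

lemma ncard_neighborSet_Gamma_eq_card_sub_one_iff (a : Fin n → R) :
    ((Gamma R n f).neighborSet a).ncard = Fintype.card R - 1 ↔ gAdj n f a a := by
  have hr : 0 < Fintype.card R := Fintype.card_pos
  by_cases ha : gAdj n f a a
  · simpa only [ha, iff_true] using ncard_neighborSet_Gamma_of_gAdj_self hsym hn ha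
  · simp only [ha, iff_false, ncard_neighborSet_Gamma_of_not_gAdj_self hsym hn ha]
    omega

lemma ncard_neighborSet_Gamma_eq_card_iff (a : Fin n → R) :
    ((Gamma R n f).neighborSet a).ncard = Fintype.card R ↔ ¬gAdj n f a a := by
  have hr : 0 < Fintype.card R := Fintype.card_pos
  by_cases ha : gAdj n f a a
  · simp only [ha, not_true_eq_false, iff_false, ncard_neighborSet_Gamma_of_gAdj_self hsym hn ha]
    omega
  · simpa only [ha, not_false_eq_true, iff_true] using
      ncard_neighborSet_Gamma_of_not_gAdj_self hsym hn ha

end Gamma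

theorem statement_2_general (R : Type) [CommRing R] [Fintype R]
    (h2 : IsUnit (2 : R)) (n : ℕ) (hn : 2 ≤ n)
    (f : (i : ℕ) → (Fin i → R) → (Fin i → R) → R)
    (hsym : ∀ (i : ℕ) (x y : Fin i → R), f i x y = f i y x) :
    {a : Fin n → R | gAdj n f a a}.ncard = Fintype.card R ∧
    {a : Fin n → R | ((Gamma R n f).neighborSet a).ncard = Fintype.card R - 1}.ncard
      = Fintype.card R ∧
    {a : Fin n → R | ((Gamma R n f).neighborSet a).ncard = Fintype.card R}.ncard
      = Fintype.card R ^ n - Fintype.card R := by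
  have hn0 : 0 < n := by omega
  have hdeg_sub_one : {a : Fin n → R | ((Gamma R n f).neighborSet a).ncard = Fintype.card R - 1}
      = {a | gAdj n f a a} :=
    Set.ext fun a => ncard_neighborSet_Gamma_eq_card_sub_one_iff hsym hn0 a
  have hdeg : {a : Fin n → R | ((Gamma R n f).neighborSet a).ncard = Fintype.card R}
      = {a | gAdj n f a a}ᶜ :=
    Set.ext fun a => ncard_neighborSet_Gamma_eq_card_iff hsym hn0 a
  refine ⟨ncard_setOf_gAdj_self h2 hn0, ?_, ?_⟩
  · rw [hdeg_sub_one, ncard_setOf_gAdj_self h2 hn0]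
  · rw [hdeg, ncard_compl, ncard_setOf_gAdj_self h2 hn0, Nat.card_eq_fintype_card,
      Fintype.card_fun, Fintype.card_fin]

/-- If `2` is a unit in the finite ring `R` with `|R| = r` and the `f_i` are symmetric, then
`Γ(R; f₂,…,f_n)` (with loops) has exactly `r` loops, and the loopless graph has exactly `r`
vertices of degree `r - 1` and exactly `r^n - r` vertices of degree `r`. -/
theorem statement_2 (R : Type) [CommRing R] [Nontrivial R] [Fintype R]
    (h2 : IsUnit (2 : R)) (n : ℕ) (hn : 2 ≤ n)
    (f : (i : ℕ) → (Fin i → R) → (Fin i → R) → R)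
    (hsym : ∀ (i : ℕ) (x y : Fin i → R), f i x y = f i y x) :
    {a : Fin n → R | gAdj n f a a}.ncard = Fintype.card R ∧
    {a : Fin n → R | ((Gamma R n f).neighborSet a).ncard = Fintype.card R - 1}.ncard
      = Fintype.card R ∧
    {a : Fin n → R | ((Gamma R n f).neighborSet a).ncard = Fintype.card R}.ncard
      = Fintype.card R ^ n - Fintype.card R :=
  statement_2_general R h2 n hn f hsym
end

section
/- Let R be a finite nonzero commutative ring with identity in which 2 is a unit, |R| = r, let n ≥ 2, and let f_i : R^{2i-2} → R for 2 ≤ i ≤ n be symmetric functions. Then the complete graph K_{r^n} admits an edge-decomposition by the loopless graph Γ(R; f_2,…,f_n): there is a collection of subgraphs of K_{r^n}, each isomorphic to Γ(R; f_2,…,f_n), whose edge sets partition the edge set of K_{r^n}. -/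
/-!
Translating `Γ(R; f₂, …, f_n)` by vectors `t ∈ R^n` with `t₀ = 0` gives `r^(n-1)` copies of it on
the vertex set `R^n`. Two distinct vertices `u, v` are adjacent in the copy `Γ + t` iff
`u_i + v_i - 2 t_i = f_i(u_1 - t_1, v_1 - t_1, …, u_{i-1} - t_{i-1}, v_{i-1} - t_{i-1})` for
`1 ≤ i < n`. Since `2` is a unit these equations determine `t_1, t_2, …` one after another, so every
edge of the complete graph on `R^n` lies in exactly one copy.
-/

theorem SimpleGraph.exists_completeGraph_decomposition_of_existsUnique_adj {V W ι : Type*}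
    (H : SimpleGraph W) (σ : ι → V ≃ W)
    (hσ : ∀ x y, x ≠ y → ∃! i, H.Adj (σ i x) (σ i y)) :
    ∃ c : ι → SimpleGraph V,
      (∀ i, c i ≤ SimpleGraph.completeGraph V) ∧
      (∀ i, Nonempty (c i ≃g H)) ∧
      (∀ e : Sym2 V, e ∈ (SimpleGraph.completeGraph V).edgeSet ↔ ∃! i, e ∈ (c i).edgeSet) := by
  refine ⟨fun i => H.comap (σ i), fun _ _ _ hxy => hxy.ne,
    fun i => ⟨SimpleGraph.Iso.comap (σ i) H⟩, fun e => ?_⟩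
  induction e using Sym2.ind with
  | _ x y => exact ⟨hσ x y, fun ⟨i, hi, _⟩ => ne_of_apply_ne (σ i) hi.ne⟩

section Gamma

variable {R : Type} [CommRing R] {n : ℕ} {f : (i : ℕ) → (Fin i → R) → (Fin i → R) → R}

theorem gAdj_comm (hsym : ∀ (i : ℕ) (x y : Fin i → R), f i x y = f i y x) {a b : Fin n → R} :
    gAdj n f a b ↔ gAdj n f b a := by
  simp only [gAdj, add_comm (a _), hsym _ (fun j => a _)]

theorem gamma_adj_iff (hsym : ∀ (i : ℕ) (x y : Fin i → R), f i x y = f i y x)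
    {a b : Fin n → R} : (Gamma R n f).Adj a b ↔ a ≠ b ∧ gAdj n f a b := by
  rw [Gamma, SimpleGraph.fromRel_adj, gAdj_comm hsym (a := b), or_self]

variable (f)

/-- The unique `t` with `t₀ = 0` and `gAdj n f (u - t) (v - t)`, solved for coordinate by coordinate;
`inv2` stands for `2⁻¹`. -/
def edgeShift (inv2 : R) (u v : Fin n → R) (i : Fin n) : R :=
  if (i : ℕ) = 0 then 0 else
    inv2 * (u i + v i -
      f i (fun j => u (Fin.castLE i.isLt.le j) - edgeShift inv2 u v (Fin.castLE i.isLt.le j))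
          (fun j => v (Fin.castLE i.isLt.le j) - edgeShift inv2 u v (Fin.castLE i.isLt.le j)))
termination_by (i : ℕ)
decreasing_by all_goals exact j.isLt

variable {f}

theorem edgeShift_of_val_eq_zero (inv2 : R) (u v : Fin n → R) {i : Fin n} (hi : (i : ℕ) = 0) :
    edgeShift f inv2 u v i = 0 := by
  rw [edgeShift, if_pos hi]

theorem sub_add_sub_eq_iff_eq_mul {inv2 : R} (h2 : 2 * inv2 = 1) {a b c t : R} :
    a - t + (b - t) = c ↔ t = inv2 * (a + b - c) := by
  constructor
  · intro h
    linear_combination (-inv2) * h - t * h2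
  · intro h
    linear_combination (-2) * h - (a + b - c) * h2

theorem gAdj_sub_apply_iff {inv2 : R} (h2 : 2 * inv2 = 1) {u v t : Fin n → R} {i : Fin n}
    (hi : (i : ℕ) ≠ 0) (hlt : ∀ j < i, t j = edgeShift f inv2 u v j) :
    (u - t) i + (v - t) i =
        f i (fun j => (u - t) (Fin.castLE i.isLt.le j)) (fun j => (v - t) (Fin.castLE i.isLt.le j))
      ↔ t i = edgeShift f inv2 u v i := by
  have hprefix : ∀ j : Fin i, t (Fin.castLE i.isLt.le j) = edgeShift f inv2 u v (Fin.castLE _ j) :=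
    fun j => hlt _ j.isLt
  rw [edgeShift, if_neg hi]
  simp only [Pi.sub_apply, hprefix]
  exact sub_add_sub_eq_iff_eq_mul h2

theorem gAdj_sub_iff {inv2 : R} (h2 : 2 * inv2 = 1) {u v t : Fin n → R}
    (ht : ∀ i : Fin n, (i : ℕ) = 0 → t i = 0) :
    gAdj n f (u - t) (v - t) ↔ t = edgeShift f inv2 u v := by
  constructor
  · intro hadj
    funext i
    induction i using WellFoundedLT.induction with
    | _ i ih =>
      by_cases hi : (i : ℕ) = 0
      · rw [ht i hi, edgeShift_of_val_eq_zero inv2 u v hi]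
      · exact (gAdj_sub_apply_iff h2 hi ih).1 (hadj i (Nat.one_le_iff_ne_zero.2 hi))
  · rintro rfl i hi
    exact (gAdj_sub_apply_iff h2 (Nat.one_le_iff_ne_zero.1 hi) fun _ _ => rfl).2 rfl

theorem existsUnique_gamma_adj_sub (h2 : IsUnit (2 : R))
    (hsym : ∀ (i : ℕ) (x y : Fin i → R), f i x y = f i y x) {u v : Fin n → R} (huv : u ≠ v) :
    ∃! t : {t : Fin n → R // ∀ i : Fin n, (i : ℕ) = 0 → t i = 0},
      (Gamma R n f).Adj (u - t) (v - t) := by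
  obtain ⟨inv2, hinv2⟩ := h2.exists_right_inv
  have key : ∀ t : {t : Fin n → R // ∀ i : Fin n, (i : ℕ) = 0 → t i = 0},
      (Gamma R n f).Adj (u - t) (v - t) ↔ (t : Fin n → R) = edgeShift f inv2 u v := fun t => by
    rw [gamma_adj_iff hsym, gAdj_sub_iff hinv2 t.2, Ne, sub_left_inj]
    exact and_iff_right huv
  exact ⟨⟨_, fun _ => edgeShift_of_val_eq_zero inv2 u v⟩, (key _).2 rfl,
    fun t ht => Subtype.ext ((key t).1 ht)⟩

end Gamma

theorem statement_6_general (R : Type) [CommRing R] [Fintype R]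
    (h2 : IsUnit (2 : R)) (n : ℕ)
    (f : (i : ℕ) → (Fin i → R) → (Fin i → R) → R)
    (hsym : ∀ (i : ℕ) (x y : Fin i → R), f i x y = f i y x) :
    ∃ (ι : Type) (c : ι → SimpleGraph (Fin (Fintype.card R ^ n))),
      (∀ i, c i ≤ SimpleGraph.completeGraph (Fin (Fintype.card R ^ n))) ∧
      (∀ i, Nonempty (c i ≃g Gamma R n f)) ∧
      (∀ e : Sym2 (Fin (Fintype.card R ^ n)),
        e ∈ (SimpleGraph.completeGraph (Fin (Fintype.card R ^ n))).edgeSet ↔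
          ∃! i, e ∈ (c i).edgeSet) := by
  let ε : Fin (Fintype.card R ^ n) ≃ (Fin n → R) :=
    (Fintype.equivFinOfCardEq (by simp)).symm
  exact ⟨_, SimpleGraph.exists_completeGraph_decomposition_of_existsUnique_adj (Gamma R n f)
    (fun t : {t : Fin n → R // ∀ i : Fin n, (i : ℕ) = 0 → t i = 0} => ε.trans (Equiv.subRight t))
    fun _ _ hxy => existsUnique_gamma_adj_sub h2 hsym (ε.injective.ne hxy)⟩

/-- If `2` is a unit in the finite ring `R` with `|R| = r` and the `f_i` are symmetric, then
the complete graph `K_{r^n}` admits an edge-decomposition into copies of the loopless graph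
`Γ(R; f₂,…,f_n)`. -/
theorem statement_6 (R : Type) [CommRing R] [Nontrivial R] [Fintype R]
    (h2 : IsUnit (2 : R)) (n : ℕ) (hn : 2 ≤ n)
    (f : (i : ℕ) → (Fin i → R) → (Fin i → R) → R)
    (hsym : ∀ (i : ℕ) (x y : Fin i → R), f i x y = f i y x) :
    ∃ (ι : Type) (c : ι → SimpleGraph (Fin (Fintype.card R ^ n))),
      (∀ i, c i ≤ SimpleGraph.completeGraph (Fin (Fintype.card R ^ n))) ∧
      (∀ i, Nonempty (c i ≃g Gamma R n f)) ∧
      (∀ e : Sym2 (Fin (Fintype.card R ^ n)),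
        e ∈ (SimpleGraph.completeGraph (Fin (Fintype.card R ^ n))).edgeSet ↔
          ∃! i, e ∈ (c i).edgeSet) :=
  statement_6_general R h2 n f hsym
end

section
/- Let q be a prime power and let m be an integer with 1 ≤ m ≤ q−1. Then the diameter of the Wenger graph W_m(q) is exactly 2m+2. -/
/-- The Wenger adjacency condition: a point `p` and a line `l` in `F^{m+1}` (0-indexed)
are adjacent iff `l_{k+1} + p_{k+1} = p_1 l_k` for all `1 ≤ k ≤ m`. -/
def wengerAdj {F : Type} [Field F] (m : ℕ) (p l : Fin (m + 1) → F) : Prop :=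
  ∀ k : Fin m, l k.succ + p k.succ = p 0 * l k.castSucc

/-- The Wenger graph `W_m(q)`, a bipartite graph on two copies of `F_q^{m+1}`. -/
def Wenger (F : Type) [Field F] (m : ℕ) :
    SimpleGraph ((Fin (m + 1) → F) ⊕ (Fin (m + 1) → F)) :=
  SimpleGraph.fromRel (fun x y => ∃ p l, x = Sum.inl p ∧ y = Sum.inr l ∧ wengerAdj m p l)

/-!
In the coordinates `(p 0, psi p)` of a point `p`, adjacency of `p` and a line `l` reads
`psi p k + l k = l 0 * p 0 ^ k`. Hence going from a point to a point through a line `l` adds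
`l 0 * (b ^ k - a ^ k)` to `psi`, where `a` and `b` are the first coordinates of the two points,
and a walk of length `2 s` between points changes `psi` by `∑ i < s, tᵢ * (aᵢ₊₁ ^ k - aᵢ ^ k)`.

Upper bound: for `m + 1` distinct values `aᵢ` the Vandermonde system is solvable, so any change of
`psi` is realised by `m` such double steps; thus every point is at distance at most `2 m` from
every point with a different first coordinate, and at most `2 m + 1` from every line.

Lower bound: pairing such a sum with the coefficients of a polynomial of degree `≤ m` gives
`∑ tᵢ * (f aᵢ₊₁ - f aᵢ)`. If `a₀ = aₛ` and `s ≤ m`, some monic `f` of degree `m` vanishes at all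
`aᵢ`, so the pairing is `0`; but from the point `0` to the point `e_m` the change of `psi` is
`e_m`, whose pairing with `f` is its leading coefficient `1`.
-/

namespace Wenger

open Finset Polynomial SimpleGraph

variable {F : Type} [Field F] {m : ℕ}

@[simp] lemma adj_inl_inr {p l : Fin (m + 1) → F} :
    (Wenger F m).Adj (.inl p) (.inr l) ↔ wengerAdj m p l := by
  simp [Wenger]

@[simp] lemma adj_inr_inl {p l : Fin (m + 1) → F} :
    (Wenger F m).Adj (.inr l) (.inl p) ↔ wengerAdj m p l := by
  simp [Wenger]

@[simp] lemma not_adj_inl_inl {p p' : Fin (m + 1) → F} :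
    ¬ (Wenger F m).Adj (.inl p) (.inl p') := by
  simp [Wenger]

@[simp] lemma not_adj_inr_inr {l l' : Fin (m + 1) → F} :
    ¬ (Wenger F m).Adj (.inr l) (.inr l') := by
  simp [Wenger]

/-- `psi p k = ∑_{1 ≤ j ≤ k} p 0 ^ (k - j) * p j`. -/
def psi (p : Fin (m + 1) → F) : Fin (m + 1) → F :=
  Fin.induction 0 fun i x => p 0 * x + p i.succ

@[simp] lemma psi_apply_zero (p : Fin (m + 1) → F) : psi p 0 = 0 := Fin.induction_zero ..

lemma psi_succ (p : Fin (m + 1) → F) (i : Fin m) :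
    psi p i.succ = p 0 * psi p i.castSucc + p i.succ := Fin.induction_succ ..

@[simp] lemma psi_zero : psi (0 : Fin (m + 1) → F) = 0 := by
  funext k
  induction k using Fin.induction with
  | zero => simp
  | succ i ih => simp [psi_succ, ih]

lemma psi_single_last (hm : m ≠ 0) :
    psi (Pi.single (Fin.last m) (1 : F)) = Pi.single (Fin.last m) 1 := by
  funext k
  induction k using Fin.induction with
  | zero => simp [hm]
  | succ i => simp [psi_succ, hm]

lemma psi_eq_of_wengerAdj {p l : Fin (m + 1) → F} (h : wengerAdj m p l) (k : Fin (m + 1)) :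
    psi p k = l 0 * p 0 ^ (k : ℕ) - l k := by
  induction k using Fin.induction with
  | zero => simp
  | succ i ih =>
    rw [psi_succ, ih, Fin.val_succ, Fin.val_castSucc, pow_succ]
    linear_combination h i

lemma eq_of_psi_eq {p p' : Fin (m + 1) → F} (h0 : p 0 = p' 0) (h : psi p = psi p') :
    p = p' := by
  funext i
  induction i using Fin.cases with
  | zero => exact h0
  | succ i =>
    have := congrFun h i.succ
    rw [psi_succ, psi_succ, h0, h] at this
    exact add_left_cancel this

lemma exists_wengerAdj_line (p : Fin (m + 1) → F) (t : F) : ∃ l, wengerAdj m p l ∧ l 0 = t := by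
  refine ⟨fun k => t * p 0 ^ (k : ℕ) - psi p k, fun i => ?_, by simp⟩
  simp only [psi_succ, Fin.val_succ, Fin.val_castSucc, pow_succ]
  ring

lemma exists_wengerAdj_point (l : Fin (m + 1) → F) (b : F) : ∃ p, wengerAdj m p l ∧ p 0 = b :=
  ⟨Fin.cons b fun i => b * l i.castSucc - l i.succ, fun i => by simp, rfl⟩

lemma psi_sub_psi_of_wengerAdj {p p' l : Fin (m + 1) → F} (h : wengerAdj m p l)
    (h' : wengerAdj m p' l) (k : Fin (m + 1)) :
    psi p' k - psi p k = l 0 * (p' 0 ^ (k : ℕ) - p 0 ^ (k : ℕ)) := by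
  rw [psi_eq_of_wengerAdj h, psi_eq_of_wengerAdj h']
  ring

lemma exists_walk_psi_eq_add_sum (p : Fin (m + 1) → F) :
    ∀ (n : ℕ) (a μ : Fin (n + 1) → F), a 0 = p 0 →
      ∃ (p' : Fin (m + 1) → F) (w : (Wenger F m).Walk (.inl p) (.inl p')),
        w.length = 2 * n ∧ p' 0 = a (Fin.last n) ∧ ∀ k : Fin (m + 1),
          psi p' k = psi p k + ∑ j, μ j * (a j ^ (k : ℕ) - a (Fin.last n) ^ (k : ℕ))
  | 0, a, μ, ha => ⟨p, .nil, rfl, ha.symm, fun k => by simp⟩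
  | n + 1, a, μ, ha => by
    obtain ⟨p₁, w, hw, hp₁, hψ₁⟩ :=
      exists_walk_psi_eq_add_sum p n (a ∘ Fin.castSucc) (μ ∘ Fin.castSucc) ha
    -- replacing the base point `a n` by `a (n + 1)` in the sum costs `(∑ μ) * (A - a n ^ k)`,
    -- which is one double step through a line with first coordinate `-∑ μ`
    obtain ⟨l, hl, hl0⟩ := exists_wengerAdj_line p₁ (-∑ j, μ (Fin.castSucc j))
    obtain ⟨p', hp', hp'0⟩ := exists_wengerAdj_point l (a (Fin.last (n + 1)))
    refine ⟨p', (w.concat (adj_inl_inr.mpr hl)).concat (adj_inr_inl.mpr hp'),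
      by simp only [Walk.length_concat, hw]; ring, hp'0, fun k => ?_⟩
    set A := a (Fin.last (n + 1)) ^ (k : ℕ)
    have hsplit : ∑ j : Fin (n + 1), μ j.castSucc * (a j.castSucc ^ (k : ℕ) - A) =
        ∑ j : Fin (n + 1), μ j.castSucc * (a j.castSucc ^ (k : ℕ) - p₁ 0 ^ (k : ℕ)) -
          (∑ j : Fin (n + 1), μ j.castSucc) * (A - p₁ 0 ^ (k : ℕ)) := by
      rw [Finset.sum_mul, ← Finset.sum_sub_distrib]
      exact Finset.sum_congr rfl fun j _ => by ring
    have := psi_sub_psi_of_wengerAdj hl hp' k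
    rw [Fin.sum_univ_castSucc, sub_self, mul_zero, add_zero, hsplit]
    simp only [Function.comp_apply] at hψ₁ hp₁
    rw [hp'0, hl0] at this
    rw [← hp₁] at hψ₁
    linear_combination this + hψ₁ k

lemma exists_psi_sub_psi_eq_sum_of_walk {p p' : Fin (m + 1) → F}
    (w : (Wenger F m).Walk (.inl p) (.inl p')) :
    ∃ (s : ℕ) (a : Fin (s + 1) → F) (t : Fin s → F), w.length = 2 * s ∧ a 0 = p 0 ∧
      a (Fin.last s) = p' 0 ∧ ∀ k : Fin (m + 1),
        psi p' k - psi p k = ∑ i, t i * (a i.succ ^ (k : ℕ) - a i.castSucc ^ (k : ℕ)) := by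
  obtain ⟨n, hn⟩ : ∃ n, w.length = n := ⟨_, rfl⟩
  induction n using Nat.strong_induction_on generalizing p with
  | _ n ih =>
    cases w with
    | nil => exact ⟨0, fun _ => p' 0, Fin.elim0, rfl, rfl, rfl, fun k => by simp⟩
    | @cons _ v _ h w =>
      rcases v with q | l
      · simp at h
      cases w with
      | @cons _ v _ h' w =>
        rcases v with p₁ | l'
        · simp only [Walk.length_cons] at hn
          obtain ⟨s, a, t, hs, ha0, has, hψ⟩ := ih w.length (by omega) w rfl
          refine ⟨s + 1, Fin.cons (p 0) a, Fin.cons (l 0) t,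
            by simp only [Walk.length_cons, hs]; ring, rfl, by simpa using has, fun k => ?_⟩
          rw [Fin.sum_univ_succ]
          simp only [Fin.cons_succ, Fin.castSucc_zero, Fin.cons_zero, ← Fin.succ_castSucc, ha0]
          linear_combination
            psi_sub_psi_of_wengerAdj (adj_inl_inr.mp h) (adj_inr_inl.mp h') k + hψ k
        · simp at h'

lemma sum_coeff_mul_sum_pow_sub {s : ℕ} {f : F[X]} (hf : f.natDegree ≤ m) (a : Fin (s + 1) → F)
    (t : Fin s → F) :
    ∑ k : Fin (m + 1), f.coeff k * ∑ i, t i * (a i.succ ^ (k : ℕ) - a i.castSucc ^ (k : ℕ)) =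
      ∑ i, t i * (f.eval (a i.succ) - f.eval (a i.castSucc)) := by
  have heval (x : F) : f.eval x = ∑ k : Fin (m + 1), f.coeff k * x ^ (k : ℕ) := by
    rw [Fin.sum_univ_eq_sum_range (fun k => f.coeff k * x ^ k),
      eval_eq_sum_range' (n := m + 1) (by omega)]
  simp only [heval, Finset.mul_sum, ← Finset.sum_sub_distrib]
  rw [Finset.sum_comm]
  exact Finset.sum_congr rfl fun i _ => Finset.sum_congr rfl fun k _ => by ring

lemma exists_sum_pow_sub_ne_single {s : ℕ} (hs : s ≤ m) (a : Fin (s + 1) → F)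
    (ha : a (Fin.last s) = a 0) (t : Fin s → F) :
    ∃ k : Fin (m + 1), ∑ i, t i * (a i.succ ^ (k : ℕ) - a i.castSucc ^ (k : ℕ)) ≠
      (Pi.single (Fin.last m) 1 : Fin (m + 1) → F) k := by
  classical
  by_contra! h
  cases s with
  | zero => simpa using h (Fin.last m)
  | succ s =>
    set S := univ.image (a ∘ Fin.succ)
    have hS : S.card ≤ m := card_image_le.trans (by simpa using hs)
    set f : F[X] := X ^ (m - S.card) * ∏ c ∈ S, (X - C c)
    have hfm : f.Monic := (monic_X_pow _).mul (monic_prod_of_monic _ _ fun c _ => monic_X_sub_C c)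
    have hfdeg : f.natDegree = m := by
      rw [(monic_X_pow _).natDegree_mul (monic_prod_of_monic _ _ fun c _ => monic_X_sub_C c),
        natDegree_X_pow, natDegree_finsetProd_X_sub_C_eq_card]
      omega
    have hroot (j : Fin (s + 2)) : f.eval (a j) = 0 := by
      have hj : a j ∈ S := by
        induction j using Fin.cases with
        | zero => rw [← ha, ← Fin.succ_last]; exact mem_image_of_mem _ (mem_univ _)
        | succ j => exact mem_image_of_mem _ (mem_univ _)
      simp [f, eval_prod, prod_eq_zero hj]
    have := sum_coeff_mul_sum_pow_sub hfdeg.le a t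
    simp only [h, hroot, sub_self, mul_zero, sum_const_zero] at this
    have hcoeff : f.coeff m = 1 := hfdeg ▸ hfm.coeff_natDegree
    simp [Pi.single_apply, hcoeff] at this

lemma two_mul_add_two_le_edist (hm : m ≠ 0) :
    2 * m + 2 ≤ (Wenger F m).edist (.inl 0) (.inl (Pi.single (Fin.last m) 1)) := by
  refine le_sInf ?_
  rintro _ ⟨w, rfl⟩
  obtain ⟨s, a, t, hw, ha0, has, hψ⟩ := exists_psi_sub_psi_eq_sum_of_walk w
  by_contra! hlt
  have : s ≤ m := by
    have : w.length < 2 * m + 2 := by exact_mod_cast hlt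
    omega
  obtain ⟨k, hk⟩ := exists_sum_pow_sub_ne_single this a (by simp [ha0, has, hm]) t
  rw [← hψ k, psi_single_last hm, psi_zero] at hk
  simp at hk

lemma exists_walk_length_eq_of_injective {p p' : Fin (m + 1) → F} {a : Fin (m + 1) → F}
    (ha : Function.Injective a) (ha0 : a 0 = p 0) (hal : a (Fin.last m) = p' 0) :
    ∃ w : (Wenger F m).Walk (.inl p) (.inl p'), w.length = 2 * m := by
  have hV : IsUnit (Matrix.vandermonde a) :=
    (Matrix.isUnit_iff_isUnit_det _).mpr (Matrix.det_vandermonde_ne_zero_iff.mpr ha).isUnit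
  obtain ⟨μ, hμ⟩ := Matrix.vecMul_surjective_iff_isUnit.mpr hV (psi p' - psi p)
  have hmoment (k : Fin (m + 1)) : ∑ j, μ j * a j ^ (k : ℕ) = psi p' k - psi p k :=
    congrFun hμ k
  obtain ⟨p'', w, hw, hp''0, hψ⟩ := exists_walk_psi_eq_add_sum p m a μ ha0
  obtain rfl : p'' = p' := eq_of_psi_eq (hp''0.trans hal) <| funext fun k => by
    have hsum := hmoment 0
    simp only [Fin.val_zero, pow_zero, mul_one, psi_apply_zero, sub_self] at hsum
    simp only [hψ k, mul_sub, sum_sub_distrib, ← sum_mul, hmoment, hsum]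
    ring
  exact ⟨w, hw⟩

lemma edist_inl_inr_le (e : Fin (m + 1) ↪ F) (p l : Fin (m + 1) → F) :
    (Wenger F m).edist (.inl p) (.inr l) ≤ 2 * m + 1 := by
  classical
  set a := e.setValue 0 (p 0)
  obtain ⟨q, hq, hq0⟩ := exists_wengerAdj_point l (a (Fin.last m))
  obtain ⟨w, hw⟩ := exists_walk_length_eq_of_injective a.injective (e.setValue_eq _ _) hq0.symm
  calc _ ≤ ((w.concat (adj_inl_inr.mpr hq)).length : ℕ∞) := edist_le _
    _ = 2 * m + 1 := by simp [hw]

lemma edist_le_two_mul_add_two (e : Fin (m + 1) ↪ F)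
    (u v : (Fin (m + 1) → F) ⊕ (Fin (m + 1) → F)) :
    (Wenger F m).edist u v ≤ 2 * m + 2 := by
  rcases u with p | l <;> rcases v with p' | l'
  · obtain ⟨l', hl'⟩ := exists_wengerAdj_line p' 0
    calc _ ≤ (Wenger F m).edist (.inl p) (.inr l') + (Wenger F m).edist (.inr l') (.inl p') :=
          SimpleGraph.edist_triangle
      _ ≤ 2 * m + 1 + 1 :=
          add_le_add (edist_inl_inr_le e p l')
            (edist_eq_one_iff_adj.mpr (adj_inr_inl.mpr hl'.1)).le
      _ = 2 * m + 2 := by ring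
  · exact (edist_inl_inr_le e p l').trans (by gcongr; norm_num)
  · rw [SimpleGraph.edist_comm]
    exact (edist_inl_inr_le e p' l).trans (by gcongr; norm_num)
  · obtain ⟨q, hq⟩ := exists_wengerAdj_point l 0
    calc _ ≤ (Wenger F m).edist (.inr l) (.inl q) + (Wenger F m).edist (.inl q) (.inr l') :=
          SimpleGraph.edist_triangle
      _ ≤ 1 + (2 * m + 1) :=
          add_le_add (edist_eq_one_iff_adj.mpr (adj_inr_inl.mpr hq.1)).le
            (edist_inl_inr_le e q l')
      _ = 2 * m + 2 := by ring

end Wenger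

open Wenger SimpleGraph in
/-- For `1 ≤ m ≤ q - 1`, the diameter of the Wenger graph `W_m(q)` is exactly `2m + 2`. -/
theorem statement_8 (F : Type) [Field F] [Fintype F] (m : ℕ)
    (hm1 : 1 ≤ m) (hm2 : m ≤ Fintype.card F - 1) :
    (Wenger F m).diam = 2 * m + 2 := by
  have hcard : Fintype.card (Fin (m + 1)) ≤ Fintype.card F := by
    rw [Fintype.card_fin]
    have := Fintype.card_pos (α := F)
    omega
  obtain ⟨e⟩ := Function.Embedding.nonempty_of_card_le hcard
  have hediam : (Wenger F m).ediam = 2 * m + 2 :=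
    le_antisymm (ediam_le_of_edist_le (edist_le_two_mul_add_two e))
      ((two_mul_add_two_le_edist (by omega)).trans edist_le_ediam)
  rw [diam, hediam]
  rfl
end

section
/- Let m, n, m', n' be positive integers and let q, q' be prime powers. The graphs B(q; m,n) and B(q'; m',n') are isomorphic if and only if q = q' and the multisets {gcd(m, q−1), gcd(n, q−1)} and {gcd(m', q−1), gcd(n', q−1)} are equal. -/
/-!
Two points `(p₁, p₂)`, `(p₁', p₂')` of `B(q; m, n)` have `#{t | (p₁^m - p₁'^m) t^n = p₂ - p₂'}`
common neighbours, two lines likewise with `m` and `n` exchanged, and a point and a line none.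
Hence for a weight `f` with `f 0 = 0`, the isomorphism invariant `∑ f (codegree x y)` over ordered
pairs of vertices depends only on `q` and the collision numbers
`S_k = #{(x, y) | x^k = y^k} = (q-1) gcd(k, q-1) + 1`. The weights `[· = q]` and `(·)²` give
`q (S_m + S_n)` and `2q³ (S_m + S_n) - 2q S_m S_n`, which determine the multiset `{S_m, S_n}` and
hence `{gcd(m, q-1), gcd(n, q-1)}`.

Conversely, `x ↦ x^k` and `x ↦ x^gcd(k, q-1)` have fibres of equal sizes on `F_q`, so they differ
by a permutation of `F_q`; re-coordinatizing with it shows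
`B(q; m, n) ≅ B(q; gcd(m, q-1), gcd(n, q-1))`.
-/

open Finset

/-- The monomial graph `B(q; m, n)`: a bipartite graph on two copies of `F_q²`, where the
point `(p₁, p₂)` and the line `[l₁, l₂]` are adjacent iff `p₂ + l₂ = p₁^m l₁^n`. -/
def monomialGraph (F : Type) [Field F] (m n : ℕ) :
    SimpleGraph ((F × F) ⊕ (F × F)) :=
  SimpleGraph.fromRel (fun x y => ∃ p l : F × F,
    x = Sum.inl p ∧ y = Sum.inr l ∧ p.2 + l.2 = p.1 ^ m * l.1 ^ n)

theorem Multiset.pair_eq_pair_iff {α : Type*} {a b c d : α} :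
    ({a, b} : Multiset α) = {c, d} ↔ a = c ∧ b = d ∨ a = d ∧ b = c := by
  simp only [Multiset.insert_eq_cons, Multiset.cons_eq_cons, Multiset.singleton_inj,
    Multiset.singleton_eq_cons_iff]
  grind

theorem Multiset.pair_eq_pair_of_add_eq_of_mul_eq {a b c d : ℕ} (hs : a + b = c + d)
    (hp : a * b = c * d) : ({a, b} : Multiset ℕ) = {c, d} := by
  have hs' : (a : ℤ) + b = c + d := by exact_mod_cast hs
  have hp' : (a : ℤ) * b = c * d := by exact_mod_cast hp
  have hz : ((a : ℤ) - c) * ((a : ℤ) - d) = 0 := by linear_combination (a : ℤ) * hs' - hp'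
  refine Multiset.pair_eq_pair_iff.mpr ?_
  rcases mul_eq_zero.mp hz with h | h
  · left; omega
  · right; omega

lemma Fintype.sum_sum_sub {A M : Type*} [AddCommGroup A] [Fintype A] [AddCommMonoid M]
    (g : A → M) : ∑ a, ∑ b, g (a - b) = Fintype.card A • ∑ c, g c := by
  rw [← card_univ, ← sum_const]
  exact Finset.sum_congr rfl fun a _ => sum_equiv (Equiv.subLeft a) _ _ fun _ => rfl

lemma Fintype.sum_sq_card_fiber {α β : Type*} [Fintype α] [Fintype β] [DecidableEq β]
    (φ : α → β) : ∑ b, #{a | φ a = b} ^ 2 = #{p : α × α | φ p.1 = φ p.2} := by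
  rw [card_eq_sum_card_fiberwise (f := fun p => φ p.1) (t := univ) (fun _ _ => mem_univ _)]
  refine Finset.sum_congr rfl fun b _ => ?_
  rw [sq, ← card_product]
  congr 1
  ext p
  simp only [mem_filter, mem_univ, true_and, mem_product]
  grind

namespace SimpleGraph

variable {V W : Type*} {G : SimpleGraph V} {G' : SimpleGraph W}

noncomputable def codegree (G : SimpleGraph V) (x y : V) : ℕ :=
  Nat.card (G.commonNeighbors x y)

lemma codegree_comm (x y : V) : G.codegree x y = G.codegree y x := by
  rw [codegree, codegree, commonNeighbors_symm]

lemma Iso.codegree_apply (e : G ≃g G') (x y : V) : G'.codegree (e x) (e y) = G.codegree x y :=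
  Nat.card_congr <|
    (e.toEquiv.subtypeEquiv fun _ => (and_congr e.map_adj_iff e.map_adj_iff).symm).symm

lemma Iso.sum_codegree [Fintype V] [Fintype W] {M : Type*} [AddCommMonoid M] (e : G ≃g G')
    (f : ℕ → M) : ∑ x, ∑ y, f (G.codegree x y) = ∑ x, ∑ y, f (G'.codegree x y) :=
  Fintype.sum_equiv e.toEquiv _ _ fun x => Fintype.sum_equiv e.toEquiv _ _ fun y =>
    congrArg f (e.codegree_apply x y).symm

end SimpleGraph

open SimpleGraph

section PowerMap

variable {F : Type*} [Field F] [Fintype F] [DecidableEq F] {u : ℕ}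

lemma card_filter_pow_eq_one (hu : 0 < u) :
    #{z : F | z ^ u = 1} = Nat.gcd u (Fintype.card F - 1) := by
  have : NeZero u := ⟨hu.ne'⟩
  calc #{z : F | z ^ u = 1}
      = Nat.card (rootsOfUnity u F) := by
        rw [← Nat.card_eq_finsetCard]
        exact Nat.card_congr ((rootsOfUnityEquivNthRoots F u).trans
          (Equiv.subtypeEquivRight fun z => by simp [Polynomial.mem_nthRoots hu])).symm
    _ = Nat.gcd u (Fintype.card F - 1) := by
        rw [rootsOfUnity_eq_ker, IsCyclic.card_powMonoidHom_ker, Nat.card_units,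
          Nat.card_eq_fintype_card, Nat.gcd_comm]

lemma card_filter_pow_eq_pow (hu : 0 < u) {x : F} (hx : x ≠ 0) :
    #{y : F | y ^ u = x ^ u} = Nat.gcd u (Fintype.card F - 1) := by
  rw [← card_filter_pow_eq_one hu]
  exact card_nbij' (· / x) (· * x) (fun y => by simp [div_pow, hx, div_eq_one_iff_eq])
    (fun z => by simp [mul_pow, hx]) (fun y _ => by simp [hx]) (fun z _ => by simp [hx])

lemma card_filter_pow_eq_zero (hu : 0 < u) : #{y : F | y ^ u = 0} = 1 := by
  simp [pow_eq_zero_iff hu.ne', filter_eq']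

lemma card_filter_pow_eq_lt_card (hu : 0 < u) (c : F) :
    #{t : F | t ^ u = c} < Fintype.card F := by
  rw [← card_univ]
  refine card_lt_card (filter_ssubset.mpr ⟨if c = 0 then 1 else 0, mem_univ _, ?_⟩)
  split_ifs with hc <;> simp [hc, zero_pow hu.ne', eq_comm]

omit [DecidableEq F] in
lemma exists_pow_eq_pow_gcd {y : F} (hy : y ≠ 0) :
    ∃ x : F, x ^ u = y ^ Nat.gcd u (Fintype.card F - 1) := by
  -- Bézout: `gcd u (q - 1) = u a + (q - 1) b`, and `y ^ (q - 1) = 1`.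
  refine ⟨y ^ Nat.gcdA u (Fintype.card F - 1), ?_⟩
  have h1 : y ^ (Fintype.card F - 1) = 1 := FiniteField.pow_card_sub_one_eq_one y hy
  rw [← zpow_natCast, ← zpow_mul, ← zpow_natCast y, Nat.gcd_eq_gcd_ab, zpow_add₀ hy, mul_comm,
    zpow_mul y (Fintype.card F - 1 : ℕ), zpow_natCast, h1, one_zpow, mul_one]

lemma card_filter_pow_eq_pow_gcd (hu : 0 < u) (c : F) :
    #{x : F | x ^ u = c} = #{x : F | x ^ Nat.gcd u (Fintype.card F - 1) = c} := by
  set g := Nat.gcd u (Fintype.card F - 1)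
  have hg : 0 < g := Nat.gcd_pos_of_pos_left _ hu
  obtain rfl | hc := eq_or_ne c 0
  · rw [card_filter_pow_eq_zero hu, card_filter_pow_eq_zero hg]
  by_cases hex : ∃ y : F, y ^ g = c
  · obtain ⟨y, rfl⟩ := hex
    have hy : y ≠ 0 := by rintro rfl; exact hc (zero_pow hg.ne')
    obtain ⟨x, hx⟩ := exists_pow_eq_pow_gcd (u := u) hy
    have hx0 : x ≠ 0 := by rintro rfl; rw [zero_pow hu.ne'] at hx; exact hc hx.symm
    rw [← hx, card_filter_pow_eq_pow hu hx0, hx, card_filter_pow_eq_pow hg hy,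
      Nat.gcd_eq_left (Nat.gcd_dvd_right _ _)]
  · have hex' : ¬∃ x : F, x ^ u = c := by
      rintro ⟨x, rfl⟩
      obtain ⟨k, hk⟩ := Nat.gcd_dvd_left u (Fintype.card F - 1)
      exact hex ⟨x ^ k, by rw [← pow_mul, mul_comm, ← hk]⟩
    rw [filter_false_of_mem fun x _ hx => hex' ⟨x, hx⟩,
      filter_false_of_mem fun x _ hx => hex ⟨x, hx⟩]

lemma exists_equiv_pow_gcd_eq_pow (hu : 0 < u) :
    ∃ σ : F ≃ F, ∀ x, σ x ^ Nat.gcd u (Fintype.card F - 1) = x ^ u :=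
  ⟨.ofFiberEquiv (f := (· ^ u)) (g := (· ^ Nat.gcd u (Fintype.card F - 1))) fun c =>
      Fintype.equivOfCardEq <| by
        rw [Fintype.card_subtype, Fintype.card_subtype, card_filter_pow_eq_pow_gcd hu c],
    Equiv.ofFiberEquiv_map _⟩

variable (F) in
def powCollisions (u : ℕ) : ℕ :=
  #{p : F × F | p.1 ^ u = p.2 ^ u}

lemma powCollisions_eq (hu : 0 < u) :
    powCollisions F u = (Fintype.card F - 1) * Nat.gcd u (Fintype.card F - 1) + 1 := by
  calc powCollisions F u = ∑ x : F, #{y : F | y ^ u = x ^ u} := by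
        rw [powCollisions, card_filter, Fintype.sum_prod_type]
        simp only [card_filter, eq_comm]
    _ = 1 + (Fintype.card F - 1) * Nat.gcd u (Fintype.card F - 1) := by
        rw [← add_sum_erase _ _ (mem_univ 0), zero_pow hu.ne', card_filter_pow_eq_zero hu,
          sum_congr rfl fun x hx => card_filter_pow_eq_pow hu (ne_of_mem_erase hx), sum_const,
          card_erase_of_mem (mem_univ 0), card_univ, smul_eq_mul]
    _ = _ := add_comm _ _

variable (u) in
lemma powCollisions_le : powCollisions F u ≤ Fintype.card F ^ 2 := by
  rw [powCollisions, sq, ← Fintype.card_prod]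
  exact card_filter_le _ _

variable (u) in
lemma card_filter_not_pow_eq_pow :
    #{p : F × F | ¬p.1 ^ u = p.2 ^ u} = Fintype.card F ^ 2 - powCollisions F u := by
  have := card_filter_add_card_filter_not (s := (univ : Finset (F × F)))
    (fun p => p.1 ^ u = p.2 ^ u)
  rw [card_univ, Fintype.card_prod, ← sq] at this
  rw [powCollisions]
  omega

variable (u) in
lemma sum_sq_card_filter_pow_eq : ∑ c, #{t : F | t ^ u = c} ^ 2 = powCollisions F u :=
  Fintype.sum_sq_card_fiber _

lemma sum_ite_card_filter_pow_eq {k : ℕ} (hu : 0 < u) (hk : Fintype.card F ≤ k) :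
    ∑ c : F, (if #{t : F | t ^ u = c} = k then 1 else 0) = 0 :=
  sum_eq_zero fun c _ => if_neg ((card_filter_pow_eq_lt_card hu c).trans_le hk).ne

end PowerMap

section PowerSums

variable {F : Type*} [Field F] [Fintype F] [DecidableEq F] {M : Type*} [AddCommMonoid M]
  {f : ℕ → M}

lemma sum_card_filter_mul_pow_eq (v : ℕ) (hf : f 0 = 0) (Δ : F) :
    ∑ c, f #{t : F | Δ * t ^ v = c} =
      if Δ = 0 then f (Fintype.card F) else ∑ c, f #{t : F | t ^ v = c} := by
  split_ifs with hΔ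
  · rw [sum_eq_single 0 (fun c _ hc => ?_) (by simp)]
    · simp [hΔ]
    · simp [hΔ, Ne.symm hc, hf]
  · exact Fintype.sum_equiv (Equiv.mulLeft₀ Δ⁻¹ (inv_ne_zero hΔ)) _ _ fun c => by
      congr 2; ext t; simp [eq_inv_mul_iff_mul_eq₀ hΔ]

lemma sum_sum_card_filter_pow_sub_pow (u v : ℕ) (hf : f 0 = 0) :
    ∑ p : F × F, ∑ p' : F × F, f #{t : F | (p.1 ^ u - p'.1 ^ u) * t ^ v = p.2 - p'.2} =
      Fintype.card F • (powCollisions F u • f (Fintype.card F) +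
        (Fintype.card F ^ 2 - powCollisions F u) • ∑ c, f #{t : F | t ^ v = c}) := by
  calc _ = ∑ x : F, ∑ y : F, ∑ a : F, ∑ b : F,
          f #{t : F | (x ^ u - y ^ u) * t ^ v = a - b} := by
        simp only [Fintype.sum_prod_type]
        exact sum_congr rfl fun x _ => sum_comm
    _ = ∑ x : F, ∑ y : F, Fintype.card F • if x ^ u = y ^ u then f (Fintype.card F)
          else ∑ c, f #{t : F | t ^ v = c} := by
        refine sum_congr rfl fun x _ => sum_congr rfl fun y _ => ?_
        rw [Fintype.sum_sum_sub (fun c => f #{t : F | (x ^ u - y ^ u) * t ^ v = c}),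
          sum_card_filter_mul_pow_eq v hf]
        simp only [sub_eq_zero]
    _ = _ := by
        rw [← Fintype.sum_prod_type (f := fun p : F × F => Fintype.card F • if p.1 ^ u = p.2 ^ u
          then f (Fintype.card F) else ∑ c, f #{t : F | t ^ v = c}), ← smul_sum, sum_ite,
          sum_const, sum_const, card_filter_not_pow_eq_pow, powCollisions]

end PowerSums

section MonomialGraph

variable {F : Type} [Field F] {m n : ℕ}

@[simp] lemma monomialGraph_adj_inl_inr {p l : F × F} :
    (monomialGraph F m n).Adj (.inl p) (.inr l) ↔ p.2 + l.2 = p.1 ^ m * l.1 ^ n := by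
  simp [monomialGraph, Prod.ext_iff]

@[simp] lemma monomialGraph_adj_inr_inl {p l : F × F} :
    (monomialGraph F m n).Adj (.inr l) (.inl p) ↔ p.2 + l.2 = p.1 ^ m * l.1 ^ n := by
  simp [monomialGraph, Prod.ext_iff]

@[simp] lemma monomialGraph_not_adj_inl_inl {p p' : F × F} :
    ¬ (monomialGraph F m n).Adj (.inl p) (.inl p') := by
  simp [monomialGraph]

@[simp] lemma monomialGraph_not_adj_inr_inr {l l' : F × F} :
    ¬ (monomialGraph F m n).Adj (.inr l) (.inr l') := by
  simp [monomialGraph]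

variable (F m n) in
def monomialGraphSwapIso : monomialGraph F m n ≃g monomialGraph F n m where
  toEquiv := Equiv.sumComm _ _
  map_rel_iff' := by rintro (_ | _) (_ | _) <;> simp [add_comm, mul_comm]

variable (m n) in
def monomialGraphIsoOfRingEquiv {F' : Type} [Field F'] (e : F ≃+* F') :
    monomialGraph F m n ≃g monomialGraph F' m n where
  toEquiv := Equiv.sumCongr (e.toEquiv.prodCongr e.toEquiv) (e.toEquiv.prodCongr e.toEquiv)
  map_rel_iff' := by
    rintro (_ | _) (_ | _) <;> simp [← map_pow, ← map_mul, ← map_add, e.injective.eq_iff]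

def monomialGraphIsoOfPow {m' n' : ℕ} (σ τ : F ≃ F) (hσ : ∀ x, σ x ^ m' = x ^ m)
    (hτ : ∀ x, τ x ^ n' = x ^ n) : monomialGraph F m n ≃g monomialGraph F m' n' where
  toEquiv := Equiv.sumCongr (σ.prodCongr (Equiv.refl F)) (τ.prodCongr (Equiv.refl F))
  map_rel_iff' := by rintro (_ | _) (_ | _) <;> simp [hσ, hτ]

lemma monomialGraph_codegree_inl_inr (p l : F × F) :
    (monomialGraph F m n).codegree (.inl p) (.inr l) = 0 := by
  rw [codegree, Nat.card_eq_zero]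
  left
  simp only [Set.isEmpty_coe_sort, Set.eq_empty_iff_forall_notMem, mem_commonNeighbors]
  rintro (_ | _) <;> simp

lemma monomialGraph_codegree_inr_inl (p l : F × F) :
    (monomialGraph F m n).codegree (.inr l) (.inl p) = 0 := by
  rw [codegree_comm, monomialGraph_codegree_inl_inr]

lemma monomialGraph_codegree_inr_inr (l l' : F × F) :
    (monomialGraph F m n).codegree (.inr l) (.inr l') =
      (monomialGraph F n m).codegree (.inl l) (.inl l') :=
  ((monomialGraphSwapIso F m n).codegree_apply (.inr l) (.inr l')).symm

variable [Fintype F] [DecidableEq F]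

lemma monomialGraph_codegree_inl_inl (p p' : F × F) :
    (monomialGraph F m n).codegree (.inl p) (.inl p') =
      #{t : F | (p.1 ^ m - p'.1 ^ m) * t ^ n = p.2 - p'.2} := by
  have hcn : (monomialGraph F m n).commonNeighbors (.inl p) (.inl p') =
      (fun t => .inr (t, p.1 ^ m * t ^ n - p.2)) ''
        {t | (p.1 ^ m - p'.1 ^ m) * t ^ n = p.2 - p'.2} := by
    ext (_ | ⟨t, s⟩)
    · simp [mem_commonNeighbors]
    · simp only [mem_commonNeighbors, monomialGraph_adj_inl_inr, Set.mem_image,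
        Set.mem_ofPred_eq, Sum.inr.injEq, Prod.mk.injEq]
      constructor
      · rintro ⟨h, h'⟩
        exact ⟨t, by linear_combination h' - h, rfl, by linear_combination -h⟩
      · rintro ⟨t, ht, rfl, rfl⟩
        exact ⟨by ring, by linear_combination ht⟩
  rw [codegree, hcn, Nat.card_image_of_injective, Nat.card_eq_card_toFinset]
  · simp
  · exact fun t t' h => congrArg Prod.fst (Sum.inr_injective h)

lemma monomialGraph_sum_codegree {M : Type*} [AddCommMonoid M] {f : ℕ → M} (hf : f 0 = 0) :
    ∑ x, ∑ y, f ((monomialGraph F m n).codegree x y) =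
      Fintype.card F • (powCollisions F m • f (Fintype.card F) +
        (Fintype.card F ^ 2 - powCollisions F m) • ∑ c, f #{t : F | t ^ n = c}) +
      Fintype.card F • (powCollisions F n • f (Fintype.card F) +
        (Fintype.card F ^ 2 - powCollisions F n) • ∑ c, f #{t : F | t ^ m = c}) := by
  simp only [Fintype.sum_sum_type, monomialGraph_codegree_inl_inr,
    monomialGraph_codegree_inr_inl, monomialGraph_codegree_inr_inr,
    monomialGraph_codegree_inl_inl, hf, sum_const_zero, add_zero, zero_add,
    sum_sum_card_filter_pow_sub_pow _ _ hf]

end MonomialGraph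

lemma card_eq_of_monomialGraph_iso {F F' : Type} [Field F] [Fintype F] [Field F'] [Fintype F']
    {m n m' n' : ℕ} (e : monomialGraph F m n ≃g monomialGraph F' m' n') :
    Fintype.card F = Fintype.card F' := by
  have hV := Fintype.card_congr e.toEquiv
  simp only [Fintype.card_sum, Fintype.card_prod] at hV
  exact Nat.mul_self_inj.mp (by omega)

lemma powCollisions_pair_eq_of_iso {F F' : Type} [Field F] [Fintype F] [DecidableEq F]
    [Field F'] [Fintype F'] [DecidableEq F'] {m n m' n' : ℕ} (hm : 0 < m) (hn : 0 < n)
    (hm' : 0 < m') (hn' : 0 < n') (e : monomialGraph F m n ≃g monomialGraph F' m' n') :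
    ({powCollisions F m, powCollisions F n} : Multiset ℕ) =
      {powCollisions F' m', powCollisions F' n'} := by
  have hq := card_eq_of_monomialGraph_iso e
  have hq0 : 0 < Fintype.card F := Fintype.card_pos
  have key {f : ℕ → ℕ} (hf : f 0 = 0) :=
    (monomialGraph_sum_codegree (F := F) (m := m) (n := n) hf).symm.trans
      ((e.sum_codegree f).trans (monomialGraph_sum_codegree hf))
  have h1 := key (f := fun k => if k = Fintype.card F then 1 else 0) (by simp [hq0.ne])
  have h2 := key (f := fun k => k ^ 2) (by simp)
  simp only [sum_ite_card_filter_pow_eq hm le_rfl, sum_ite_card_filter_pow_eq hn le_rfl,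
    sum_ite_card_filter_pow_eq hm' hq.ge, sum_ite_card_filter_pow_eq hn' hq.ge, ← hq,
    sum_sq_card_filter_pow_eq, if_pos, smul_eq_mul, mul_one, mul_zero, add_zero,
    ← mul_add] at h1 h2
  have hs := Nat.eq_of_mul_eq_mul_left hq0 h1
  refine Multiset.pair_eq_pair_of_add_eq_of_mul_eq hs ?_
  have hle := powCollisions_le (F := F)
  have hle' := powCollisions_le (F := F')
  rw [← hq] at hle'
  zify [hle, hle'] at hs h2
  have : (2 * Fintype.card F : ℤ) * (powCollisions F m * powCollisions F n) =
      2 * Fintype.card F * (powCollisions F' m' * powCollisions F' n') := by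
    linear_combination 2 * (Fintype.card F : ℤ) ^ 3 * hs - h2
  exact_mod_cast mul_left_cancel₀ (by positivity) this

lemma monomialGraph_nonempty_iso_gcd {F : Type} [Field F] [Fintype F] {m n : ℕ} (hm : 0 < m)
    (hn : 0 < n) : Nonempty (monomialGraph F m n ≃g
      monomialGraph F (Nat.gcd m (Fintype.card F - 1)) (Nat.gcd n (Fintype.card F - 1))) := by
  classical
  obtain ⟨σ, hσ⟩ := exists_equiv_pow_gcd_eq_pow (F := F) hm
  obtain ⟨τ, hτ⟩ := exists_equiv_pow_gcd_eq_pow (F := F) hn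
  exact ⟨monomialGraphIsoOfPow σ τ hσ hτ⟩

lemma monomialGraph_nonempty_iso_of_pair_eq {F : Type} [Field F] {a b c d : ℕ}
    (h : ({a, b} : Multiset ℕ) = {c, d}) :
    Nonempty (monomialGraph F a b ≃g monomialGraph F c d) := by
  rcases Multiset.pair_eq_pair_iff.mp h with ⟨rfl, rfl⟩ | ⟨rfl, rfl⟩
  · exact ⟨.refl⟩
  · exact ⟨monomialGraphSwapIso F a b⟩

/-- `B(q; m, n) ≅ B(q'; m', n')` iff `q = q'` and
`{gcd(m, q-1), gcd(n, q-1)} = {gcd(m', q-1), gcd(n', q-1)}` as multisets. -/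
theorem statement_10 (F F' : Type) [Field F] [Fintype F] [Field F'] [Fintype F']
    (m n m' n' : ℕ) (hm : 0 < m) (hn : 0 < n) (hm' : 0 < m') (hn' : 0 < n') :
    Nonempty (monomialGraph F m n ≃g monomialGraph F' m' n') ↔
      (Fintype.card F = Fintype.card F' ∧
        ({Nat.gcd m (Fintype.card F - 1), Nat.gcd n (Fintype.card F - 1)} : Multiset ℕ)
          = {Nat.gcd m' (Fintype.card F - 1), Nat.gcd n' (Fintype.card F - 1)}) := by
  classical
  constructor
  · rintro ⟨e⟩
    have hq := card_eq_of_monomialGraph_iso e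
    have h := powCollisions_pair_eq_of_iso hm hn hm' hn' e
    rw [powCollisions_eq hm, powCollisions_eq hn, powCollisions_eq hm', powCollisions_eq hn',
      ← hq] at h
    have hq1 : 0 < Fintype.card F - 1 := Nat.sub_pos_of_lt Fintype.one_lt_card
    refine ⟨hq, Multiset.map_injective (f := fun g => (Fintype.card F - 1) * g + 1) ?_ ?_⟩
    · exact fun g g' hg => Nat.eq_of_mul_eq_mul_left hq1 (Nat.add_right_cancel hg)
    · simpa using h
  · rintro ⟨hq, h⟩
    obtain ⟨e₁⟩ := monomialGraph_nonempty_iso_gcd (F := F) hm hn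
    obtain ⟨e₂⟩ := monomialGraph_nonempty_iso_of_pair_eq (F := F) h
    obtain ⟨e₃⟩ := monomialGraph_nonempty_iso_gcd (F := F') hm' hn'
    rw [← hq] at e₃
    exact ⟨e₁.trans <| e₂.trans <|
      (monomialGraphIsoOfRingEquiv _ _ (FiniteField.ringEquivOfCardEq hq)).trans e₃.symm⟩
end

section
/- Let p be a prime and let t and k both be powers of p. Then the multicolor Ramsey number satisfies r_k(K_{2,t+1}) ≥ t·k^2 + 1. Moreover, for every positive integer k and every positive integer t, r_k(K_{2,t+1}) ≤ t·k^2 + k + 2; and if k is a prime power, then r_k(C_4) ≥ k^2 + 2. -/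
/-- `N` is Ramsey for `G` with `n` colors: every `n`-coloring of the edges of the complete
graph `K_N` contains a monochromatic copy of `G`. -/
def IsRamseyFor {α : Type} (G : SimpleGraph α) (n N : ℕ) : Prop :=
  ∀ c : Sym2 (Fin N) → Fin n,
    ∃ (i : Fin n) (φ : α → Fin N), Function.Injective φ ∧
      ∀ u v, G.Adj u v → c s(φ u, φ v) = i

/-- The multicolor Ramsey number `r_n(G)`: the minimum `N` such that every `n`-coloring of
the edges of `K_N` yields a monochromatic copy of `G`. -/
noncomputable def multiRamsey {α : Type} (G : SimpleGraph α) (n : ℕ) : ℕ :=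
  sInf {N | IsRamseyFor G n N}

/-!
Upper bound: if a `k`-colouring of `K_N` has no monochromatic `K_{2,t+1}`, then two vertices have
at most `t` common neighbours joined to both in any given colour, so at most `t k` in all. Counting
the monochromatic cherries `u - x - v` by their centre `x` (at least `(N - 1)² / k` ordered pairs
`(u, v)` by Cauchy–Schwarz) and by their ends (at most `t k` for `u ≠ v`) gives
`N (N - 1)² ≤ k N (N - 1) (t k + 1)`, i.e. `N ≤ t k² + k + 1`.

Lower bounds: for `q = t k` a power of `p`, colour the pairs of `𝔽_q × W`, `|W| = k`, by
`((a, x), (b, y)) ↦ x + y - g (a b)` for an additive `g : 𝔽_q → W` whose kernel has `t` elements.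
For `C₄ ≅ K_{2,2}` take `t = 1`, `g = id`, and add a vertex joined to each `(a, b)` in colour `a`.
-/

open Finset SimpleGraph

section Coloring

variable {α β V V' κ κ' : Type*}

def HasMonoCopy (G : SimpleGraph α) (c : Sym2 V → κ) : Prop :=
  ∃ (i : κ) (φ : α → V), Function.Injective φ ∧ ∀ u v, G.Adj u v → c s(φ u, φ v) = i

theorem HasMonoCopy.of_copy {G : SimpleGraph α} {H : SimpleGraph β} {c : Sym2 V → κ}
    (f : Copy H G) : HasMonoCopy G c → HasMonoCopy H c := fun ⟨i, φ, hφ, hmono⟩ =>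
  ⟨i, φ ∘ f, hφ.comp f.injective, fun _ _ h => hmono _ _ (f.toHom.map_adj h)⟩

theorem HasMonoCopy.of_relabel {G : SimpleGraph α} {c : Sym2 V → κ} {e : V' → V}
    (he : Function.Injective e) (ε : κ ≃ κ') :
    HasMonoCopy G (fun z => ε (c (z.map e))) → HasMonoCopy G c := fun ⟨i, φ, hφ, hmono⟩ =>
  ⟨ε.symm i, e ∘ φ, he.comp hφ, fun u v h => ε.eq_symm_apply.mpr (hmono u v h)⟩

theorem not_hasMonoCopy_of_card_lt [Fintype α] [Fintype V] (G : SimpleGraph α)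
    (c : Sym2 V → κ) (h : Fintype.card V < Fintype.card α) : ¬HasMonoCopy G c :=
  fun ⟨_, _, hφ, _⟩ => (Fintype.card_le_of_injective _ hφ).not_gt h

theorem hasMonoCopy_completeBipartiteGraph {c : Sym2 V → κ} {f : α → V} {g : β → V}
    (hf : Function.Injective f) (hg : Function.Injective g) (hfg : ∀ a b, f a ≠ g b) {i : κ}
    (hc : ∀ a b, c s(f a, g b) = i) : HasMonoCopy (completeBipartiteGraph α β) c := by
  refine ⟨i, Sum.elim f g, hf.sumElim hg hfg, ?_⟩
  rintro (a | b) (a' | b') h <;> simp_all [Sym2.eq_swap]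

end Coloring

section Ramsey

variable {α : Type} {G : SimpleGraph α} {n N M : ℕ}

theorem IsRamseyFor.mono (h : IsRamseyFor G n N) (hNM : N ≤ M) : IsRamseyFor G n M :=
  fun c => HasMonoCopy.of_relabel (Fin.castLE_injective hNM) (Equiv.refl _)
    (h fun z => c (z.map (Fin.castLE hNM)))

theorem IsRamseyFor.of_copy {β : Type} {H : SimpleGraph β} (f : Copy H G)
    (h : IsRamseyFor G n N) : IsRamseyFor H n N :=
  fun c => HasMonoCopy.of_copy f (h c)

theorem not_isRamseyFor_of_coloring {V κ : Type*} [Finite V] [Finite κ] (c : Sym2 V → κ)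
    (hc : ¬HasMonoCopy G c) (hV : Nat.card V = N) (hκ : Nat.card κ = n) :
    ¬IsRamseyFor G n N := fun h =>
  let e : Fin N ≃ V := ((Finite.equivFin V).trans (finCongr hV)).symm
  let ε : κ ≃ Fin n := (Finite.equivFin κ).trans (finCongr hκ)
  hc (HasMonoCopy.of_relabel e.injective ε (h fun z => ε (c (z.map e))))

theorem lt_multiRamsey (hM : IsRamseyFor G n M) (hN : ¬IsRamseyFor G n N) :
    N < multiRamsey G n :=
  Nat.lt_of_not_le fun h =>
    hN ((Nat.sInf_mem (s := {N | IsRamseyFor G n N}) ⟨M, hM⟩ : IsRamseyFor G n _).mono h)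

end Ramsey

section Counting

variable {V κ : Type*} [Fintype V] [DecidableEq V] [DecidableEq κ] (c : Sym2 V → κ)

def monoCommonNbrs (u v : V) : Finset V :=
  {x | x ≠ u ∧ x ≠ v ∧ c s(u, x) = c s(v, x)}

theorem mem_monoCommonNbrs {u v x : V} :
    x ∈ monoCommonNbrs c u v ↔ x ≠ u ∧ x ≠ v ∧ c s(u, x) = c s(v, x) := by
  simp [monoCommonNbrs]

theorem card_monoCommonNbrs_le [Fintype κ] {t : ℕ}
    (hc : ¬HasMonoCopy (completeBipartiteGraph (Fin 2) (Fin (t + 1))) c) {u v : V}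
    (huv : u ≠ v) :
    #(monoCommonNbrs c u v) ≤ t * Fintype.card κ := by
  set S := monoCommonNbrs c u v
  have hfiber : ∀ i ∈ S.image (fun x => c s(u, x)), #{x ∈ S | c s(u, x) = i} ≤ t := by
    intro i _
    by_contra! hbig
    obtain ⟨g⟩ := Function.Embedding.nonempty_of_card_le
      (α := Fin (t + 1)) (β := ({x ∈ S | c s(u, x) = i} : Finset V))
      (by rwa [Fintype.card_fin, Fintype.card_coe])
    have hg : ∀ j, (g j : V) ≠ u ∧ (g j : V) ≠ v ∧ c s(u, g j) = i ∧ c s(v, g j) = i := by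
      intro j
      obtain ⟨hS, hi⟩ := Finset.mem_filter.mp (g j).2
      obtain ⟨hu, hv, huv⟩ := (mem_monoCommonNbrs c).mp hS
      exact ⟨hu, hv, hi, huv ▸ hi⟩
    refine hc (hasMonoCopy_completeBipartiteGraph (f := ![u, v]) (g := fun j => (g j : V))
      (i := i)
      (Fin.cons_injective_iff.mpr ⟨by simpa using huv, Function.injective_of_subsingleton _⟩)
      (Subtype.val_injective.comp g.injective) ?_ ?_)
    · intro a j
      fin_cases a
      exacts [(hg j).1.symm, (hg j).2.1.symm]
    · intro a j
      fin_cases a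
      exacts [(hg j).2.2.1, (hg j).2.2.2]
  calc #S ≤ t * #(S.image fun x => c s(u, x)) := card_le_mul_card_image S t hfiber
    _ ≤ t * Fintype.card κ := Nat.mul_le_mul_left t (card_le_univ _)

theorem sum_card_monoCommonNbrs_le [Fintype κ] {t : ℕ}
    (hc : ¬HasMonoCopy (completeBipartiteGraph (Fin 2) (Fin (t + 1))) c) (u : V) :
    ∑ v, #(monoCommonNbrs c u v) ≤ (Fintype.card V - 1) * (t * Fintype.card κ + 1) := by
  have hdiag : #(monoCommonNbrs c u u) ≤ Fintype.card V - 1 := by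
    rw [← card_univ, ← card_erase_of_mem (mem_univ u)]
    exact card_le_card fun x hx => mem_erase.mpr ⟨((mem_monoCommonNbrs c).mp hx).1, mem_univ x⟩
  have hoff : ∑ v ∈ univ.erase u, #(monoCommonNbrs c u v) ≤
      (Fintype.card V - 1) * (t * Fintype.card κ) := by
    calc ∑ v ∈ univ.erase u, #(monoCommonNbrs c u v)
        ≤ ∑ _v ∈ univ.erase u, t * Fintype.card κ :=
          sum_le_sum fun v hv => card_monoCommonNbrs_le c hc (ne_of_mem_erase hv).symm
      _ = (Fintype.card V - 1) * (t * Fintype.card κ) := by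
          rw [sum_const, card_erase_of_mem (mem_univ u), card_univ, smul_eq_mul]
  rw [← add_sum_erase _ _ (mem_univ u)]
  linarith

theorem sq_card_sub_one_le [Fintype κ] (x : V) :
    (Fintype.card V - 1) ^ 2 ≤
      Fintype.card κ * #{p : V × V | x ∈ monoCommonNbrs c p.1 p.2} := by
  let nbrs (i : κ) : Finset V := {u | x ≠ u ∧ c s(u, x) = i}
  have hsum : ∑ i, #(nbrs i) = Fintype.card V - 1 := by
    rw [← card_univ, ← card_erase_of_mem (mem_univ x), card_eq_sum_card_fiberwise
      (f := fun u => c s(u, x)) (t := univ) fun _ _ => mem_univ _]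
    refine sum_congr rfl fun i _ => congrArg card ?_
    ext u
    simp [nbrs, eq_comm (a := x)]
  have hpairs : #{p : V × V | x ∈ monoCommonNbrs c p.1 p.2} = ∑ i, #(nbrs i) ^ 2 := by
    rw [card_eq_sum_card_fiberwise (f := fun p => c s(p.1, x)) (t := univ)
      fun _ _ => mem_univ _]
    refine sum_congr rfl fun i _ => ?_
    rw [sq, ← card_product]
    congr 1
    ext ⟨u, v⟩
    simp only [mem_filter, mem_univ, true_and, mem_product, mem_monoCommonNbrs, nbrs]
    grind
  calc (Fintype.card V - 1) ^ 2 = (∑ i, #(nbrs i)) ^ 2 := by rw [hsum]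
    _ ≤ #(univ : Finset κ) * ∑ i, #(nbrs i) ^ 2 := sq_sum_le_card_mul_sum_sq
    _ = _ := by rw [card_univ, hpairs]

theorem card_le_of_not_hasMonoCopy [Fintype κ] {t : ℕ}
    (hc : ¬HasMonoCopy (completeBipartiteGraph (Fin 2) (Fin (t + 1))) c) :
    Fintype.card V ≤ t * Fintype.card κ ^ 2 + Fintype.card κ + 1 := by
  set N := Fintype.card V
  set k := Fintype.card κ
  have hcount : ∑ x : V, #{p : V × V | x ∈ monoCommonNbrs c p.1 p.2} =
      ∑ u, ∑ v, #(monoCommonNbrs c u v) := by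
    rw [← Fintype.sum_prod_type' (f := fun u v => #(monoCommonNbrs c u v))]
    simp only [card_filter]
    rw [sum_comm]
    simp
  have hmain : N * (N - 1) ^ 2 ≤ k * (N * ((N - 1) * (t * k + 1))) :=
    calc N * (N - 1) ^ 2 = ∑ _x : V, (N - 1) ^ 2 := by simp [N]
      _ ≤ ∑ x : V, k * #{p : V × V | x ∈ monoCommonNbrs c p.1 p.2} :=
          sum_le_sum fun x _ => sq_card_sub_one_le c x
      _ = k * ∑ u, ∑ v, #(monoCommonNbrs c u v) := by rw [← mul_sum, hcount]
      _ ≤ k * ∑ _u : V, (N - 1) * (t * k + 1) :=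
          Nat.mul_le_mul_left k (sum_le_sum fun u _ => sum_card_monoCommonNbrs_le c hc u)
      _ = k * (N * ((N - 1) * (t * k + 1))) := by simp [N]
  rcases Nat.lt_or_ge N 2 with hN | hN
  · omega
  have hpos : 0 < N * (N - 1) := Nat.mul_pos (by omega) (by omega)
  have : N - 1 ≤ k * (t * k + 1) :=
    Nat.le_of_mul_le_mul_left (by linarith [hmain] : N * (N - 1) * (N - 1) ≤ _) hpos
  calc N ≤ k * (t * k + 1) + 1 := by omega
    _ = t * k ^ 2 + k + 1 := by ring

theorem isRamseyFor_completeBipartiteGraph (k t : ℕ) :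
    IsRamseyFor (completeBipartiteGraph (Fin 2) (Fin (t + 1))) k (t * k ^ 2 + k + 2) := by
  intro c
  by_contra hc
  have := card_le_of_not_hasMonoCopy c hc
  simp only [Fintype.card_fin] at this
  omega

end Counting

section Construction

variable {F W : Type*} [Field F] [AddCommGroup W]

def bilinearColoring (g : F →+ W) : Sym2 (F × W) → W :=
  Sym2.lift ⟨fun x y => x.2 + y.2 - g (x.1 * y.1), fun x y => by
    dsimp only
    rw [add_comm x.2, mul_comm x.1]⟩

theorem bilinearColoring_mk (g : F →+ W) (x y : F × W) :
    bilinearColoring g s(x, y) = x.2 + y.2 - g (x.1 * y.1) :=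
  rfl

/-- A common neighbour `(b, y)` of `u` and `v` in colour `s` satisfies
`g ((u.1 - v.1) b) = u.2 - v.2` and `y = s - u.2 + g (u.1 b)`: for `u.1 ≠ v.1` there are at most
`|ker g|` of them, and `u.1 = v.1` forces `u = v`. -/
theorem not_hasMonoCopy_bilinearColoring [Finite F] (g : F →+ W) {t : ℕ}
    (hg : Nat.card g.ker ≤ t) :
    ¬HasMonoCopy (completeBipartiteGraph (Fin 2) (Fin (t + 1))) (bilinearColoring g) := by
  rintro ⟨s, φ, hφ, hmono⟩
  set u := φ (.inl 0)
  set v := φ (.inl 1)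
  set y := fun j => φ (.inr j)
  have hu : ∀ j, u.2 + (y j).2 - g (u.1 * (y j).1) = s :=
    fun j => hmono (.inl 0) (.inr j) (by simp)
  have hv : ∀ j, v.2 + (y j).2 - g (v.1 * (y j).1) = s :=
    fun j => hmono (.inl 1) (.inr j) (by simp)
  have hy : ∀ j, (y j).2 = s - u.2 + g (u.1 * (y j).1) := fun j => by
    rw [← hu j]; abel
  have hkey : ∀ j, g ((u.1 - v.1) * (y j).1) = u.2 - v.2 := fun j => by
    rw [sub_mul, map_sub, eq_comm, ← sub_eq_zero, ← sub_eq_zero.mpr ((hu j).trans (hv j).symm)]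
    abel
  have huv : u ≠ v := fun h => by simpa using hφ h
  by_cases h1 : u.1 = v.1
  · refine huv (Prod.ext h1 (sub_eq_zero.mp ?_))
    rw [← hkey 0, h1, sub_self, zero_mul, map_zero]
  · let d : Fin (t + 1) → g.ker := fun j =>
      ⟨(u.1 - v.1) * ((y j).1 - (y 0).1), by simp [mul_sub, map_sub, hkey]⟩
    have hd : Function.Injective d := fun j j' h => by
      have h1' : (y j).1 = (y j').1 := by
        simpa [d, sub_ne_zero.mpr h1] using congrArg Subtype.val h
      have : y j = y j' := Prod.ext h1' (by rw [hy, hy, h1'])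
      simpa using hφ this
    have := Nat.card_le_card_of_injective d hd
    simp only [Nat.card_eq_fintype_card, Fintype.card_fin] at this
    omega

theorem exists_addMonoidHom_card_ker_le {K M : Type*} [Field K] [Finite K] [AddCommGroup M]
    [Module K M] [FiniteDimensional K M] {a b : ℕ} (h : Module.finrank K M = a + b) :
    ∃ g : M →+ (Fin b → K), Nat.card g.ker ≤ Nat.card K ^ a := by
  let e := LinearEquiv.ofFinrankEq M ((Fin a → K) × (Fin b → K))
    (by rw [h, Module.finrank_prod, Module.finrank_fin_fun, Module.finrank_fin_fun])
  let g := (LinearMap.snd K _ _ ∘ₗ e.toLinearMap).toAddMonoidHom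
  refine ⟨g, ?_⟩
  have hinj : Function.Injective fun z : g.ker => (e z).1 := fun z z' hzz' =>
    Subtype.ext (e.injective (Prod.ext hzz' (z.2.trans z'.2.symm)))
  simpa [Nat.card_fun] using Nat.card_le_card_of_injective _ hinj

theorem lt_multiRamsey_completeBipartiteGraph {p : ℕ} (hp : p.Prime) (a b : ℕ) :
    p ^ a * (p ^ b) ^ 2 <
      multiRamsey (completeBipartiteGraph (Fin 2) (Fin (p ^ a + 1))) (p ^ b) := by
  refine lt_multiRamsey (isRamseyFor_completeBipartiteGraph _ _) ?_
  rcases Nat.eq_zero_or_pos (a + b) with hab | hab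
  · -- there is no field with `t k = 1` elements, but one vertex is already too few
    obtain ⟨rfl, rfl⟩ : a = 0 ∧ b = 0 := by omega
    exact not_isRamseyFor_of_coloring (fun _ : Sym2 Unit => ())
      (not_hasMonoCopy_of_card_lt _ _ (by simp)) (by simp) (by simp)
  · have : Fact p.Prime := ⟨hp⟩
    obtain ⟨g, hg⟩ := exists_addMonoidHom_card_ker_le (GaloisField.finrank p hab.ne')
    refine not_isRamseyFor_of_coloring (bilinearColoring g) (not_hasMonoCopy_bilinearColoring g
      (by simpa using hg)) ?_ (by simp)
    rw [Nat.card_prod, GaloisField.card p _ hab.ne', Nat.card_fun, Nat.card_zmod,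
      Nat.card_fin, pow_add]
    ring

end Construction

section CycleGraph

def cycleGraphFourIso : cycleGraph 4 ≃g completeBipartiteGraph (Fin 2) (Fin 2) where
  toFun := ![.inl 0, .inr 0, .inl 1, .inr 1]
  invFun := Sum.elim ![0, 2] ![1, 3]
  left_inv := by decide
  right_inv := by decide
  map_rel_iff' := by simp only [completeBipartiteGraph_adj, cycleGraph_adj]; decide

variable (F : Type*) [Field F]

def coneColor : Option (F × F) → Option (F × F) → F
  | some x, some y => bilinearColoring (AddMonoidHom.id F) s(x, y)
  | none, some y | some y, none => y.1
  | none, none => 0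

def coneColoring : Sym2 (Option (F × F)) → F :=
  Sym2.lift ⟨coneColor F, by
    rintro (_ | x) (_ | y) <;> simp only [coneColor, Sym2.eq_swap]⟩

theorem completeBipartiteGraph_two_two_exists_opposite (z : Fin 2 ⊕ Fin 2) :
    ∃ z' w w', z' ≠ z ∧ w ≠ w' ∧ (completeBipartiteGraph (Fin 2) (Fin 2)).Adj z w ∧
      (completeBipartiteGraph (Fin 2) (Fin 2)).Adj z w' ∧
      (completeBipartiteGraph (Fin 2) (Fin 2)).Adj z' w ∧
      (completeBipartiteGraph (Fin 2) (Fin 2)).Adj z' w' := by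
  simp only [completeBipartiteGraph_adj]
  revert z
  decide

/-- A monochromatic `K_{2,2}` through the vertex at infinity would have its two neighbours of
infinity `(s, b)`, `(s, b')` joined to a common `(a, c)` in one colour, forcing `b = b'`. -/
theorem not_hasMonoCopy_coneColoring [Finite F] :
    ¬HasMonoCopy (completeBipartiteGraph (Fin 2) (Fin 2)) (coneColoring F) := by
  rintro ⟨s, φ, hφ, hmono⟩
  by_cases hinf : ∃ z, φ z = none
  · obtain ⟨z, hz⟩ := hinf
    obtain ⟨z', w, w', hz', hww', hzw, hzw', hz'w, hz'w'⟩ :=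
      completeBipartiteGraph_two_two_exists_opposite z
    have hsome : ∀ z'', z'' ≠ z → ∃ x, φ z'' = some x := fun z'' h =>
      Option.ne_none_iff_exists'.mp (hz ▸ hφ.ne h)
    obtain ⟨x, hx⟩ := hsome z' hz'
    obtain ⟨y, hy⟩ := hsome w hzw.ne.symm
    obtain ⟨y', hy'⟩ := hsome w' hzw'.ne.symm
    have hy₁ := hmono z w hzw
    have hy'₁ := hmono z w' hzw'
    have hxy := hmono z' w hz'w
    have hxy' := hmono z' w' hz'w'
    simp only [coneColoring, Sym2.lift_mk, hz, hx, hy, hy', coneColor, bilinearColoring_mk,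
      AddMonoidHom.id_apply] at hy₁ hy'₁ hxy hxy'
    refine hww' (hφ ?_)
    rw [hy, hy', Option.some_inj]
    refine Prod.ext (hy₁.trans hy'₁.symm) ?_
    rw [hy₁] at hxy
    rw [hy'₁] at hxy'
    linear_combination hxy - hxy'
  · simp only [not_exists] at hinf
    choose ψ hψ using fun z => Option.ne_none_iff_exists'.mp (hinf z)
    refine not_hasMonoCopy_bilinearColoring (AddMonoidHom.id F) (t := 1) ?_
      ⟨s, ψ, fun z z' h => hφ (by rw [hψ, hψ, h]), fun u v h => ?_⟩
    · simp [(AddMonoidHom.ker_eq_bot_iff (AddMonoidHom.id F)).mpr Function.injective_id]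
    · simpa [coneColoring, hψ, coneColor] using hmono u v h

theorem sq_add_two_le_multiRamsey_cycleGraph_four {k : ℕ} (hk : IsPrimePow k) :
    k ^ 2 + 2 ≤ multiRamsey (cycleGraph 4) k := by
  obtain ⟨q, n, hq, hn, rfl⟩ := hk
  have : Fact q.Prime := ⟨hq.nat_prime⟩
  refine lt_multiRamsey (IsRamseyFor.of_copy (G := completeBipartiteGraph (Fin 2) (Fin 2))
    cycleGraphFourIso.toCopy (isRamseyFor_completeBipartiteGraph (q ^ n) 1)) ?_
  refine not_isRamseyFor_of_coloring (coneColoring (GaloisField q n))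
    (fun h => not_hasMonoCopy_coneColoring _ (h.of_copy cycleGraphFourIso.symm.toCopy)) ?_ ?_
  · rw [Finite.card_option, Nat.card_prod, GaloisField.card q n hn.ne', sq]
  · exact GaloisField.card q n hn.ne'

end CycleGraph

/-- Lower and upper bounds on multicolor Ramsey numbers: `r_k(K_{2,t+1}) ≥ t k² + 1` when
`t` and `k` are powers of the same prime `p`; `r_k(K_{2,t+1}) ≤ t k² + k + 2` for all
positive integers `k, t`; and `r_k(C₄) ≥ k² + 2` for every prime power `k`. -/
theorem statement_19 (p t k : ℕ) (hp : p.Prime)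
    (ht : ∃ a : ℕ, t = p ^ a) (hk : ∃ b : ℕ, k = p ^ b) :
    t * k ^ 2 + 1 ≤ multiRamsey (completeBipartiteGraph (Fin 2) (Fin (t + 1))) k ∧
    (∀ k' t' : ℕ, 0 < k' → 0 < t' →
      multiRamsey (completeBipartiteGraph (Fin 2) (Fin (t' + 1))) k' ≤
        t' * k' ^ 2 + k' + 2) ∧
    (∀ k' : ℕ, IsPrimePow k' →
      k' ^ 2 + 2 ≤ multiRamsey (SimpleGraph.cycleGraph 4) k') := by
  obtain ⟨a, rfl⟩ := ht
  obtain ⟨b, rfl⟩ := hk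
  exact ⟨lt_multiRamsey_completeBipartiteGraph hp a b,
    fun k' t' _ _ => Nat.sInf_le (isRamseyFor_completeBipartiteGraph k' t'),
    fun _ => sq_add_two_le_multiRamsey_cycleGraph_four⟩
end
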